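/- Let (R,m) be a Noetherian local ring and let J = (f_1,...,f_n) be a reduction of I = (f_1,...,f_n,f), ideals of R. Then rn_J(I) + 1 ≤ rt(I), i.e., the reduction number of I with respect to J plus one is at most the relation type of I. -/

import Mathlib

open Ideal Submodule Polynomial

variable {R : Type*} [CommRing R]

/-- The canonical presentation of the Rees algebra of `span (range g)`,
sending `ξᵢ` to `gᵢ t`. -/
noncomputable def reesPresentation {m : ℕ} (g : Fin m → R) :
    MvPolynomial (Fin m) R →ₐ[R] reesAlgebra (Ideal.span (Set.range g)) :=
  MvPolynomial.aeval fun i =>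
    (⟨Polynomial.monomial 1 (g i), reesAlgebra.monomial_mem.mpr (by
        rw [pow_one]; exact Ideal.subset_span ⟨i, rfl⟩)⟩ :
      reesAlgebra (Ideal.span (Set.range g)))

/-- The ideal of equations of the Rees algebra for the presentation determined by `g`. -/
noncomputable def reesEquations {m : ℕ} (g : Fin m → R) : Ideal (MvPolynomial (Fin m) R) :=
  RingHom.ker (reesPresentation g).toRingHom

/-- The subideal of an ideal of `MvPolynomial` generated by its homogeneous
elements of degree at most `d`. -/
noncomputable def idealUpToDegree {m : ℕ} (Q : Ideal (MvPolynomial (Fin m) R)) (d : ℕ) :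
    Ideal (MvPolynomial (Fin m) R) :=
  Ideal.span {P | P ∈ Q ∧ ∃ e ≤ d, MvPolynomial.IsHomogeneous P e}

/-- The relation type of the ideal `span (range g)`, computed from the presentation of its
Rees algebra determined by the generators `g`. -/
noncomputable def relationType {m : ℕ} (g : Fin m → R) : ℕ :=
  sInf {L | 1 ≤ L ∧ idealUpToDegree (reesEquations g) L = reesEquations g}

/-- The reduction number of `I` with respect to `J`. -/
noncomputable def reductionNumber (J I : Ideal R) : ℕ :=
  sInf {r | I ^ (r + 1) = J * I ^ r}

/-!
Write `F = (f, g)` and let `L + 1` be the relation type, so that the equations `Q` of the Rees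
algebra are generated by homogeneous relations of degree `≤ L + 1`. If `q ∈ Q` is homogeneous of
degree `e + 1` and `c` is its coefficient of `ξ_last ^ (e + 1)`, every other monomial of `q`
contains some `ξᵢ` with `i` not last, so `0 = q(F) ≡ c gᵉ⁺¹` modulo `J Iᵉ`; hence
`c g^(L+1) ∈ J I^L`. Substituting `ξᵢ ↦ 0` for `i` not last and `ξ_last ↦ X` is a ring map
to `R[X]` that reads off these coefficients, so all coefficients of the image of any element of
`Q` lie in the colon ideal `(J I^L : g^(L+1))`. Applied to the relation
`ξ_last^(r+1) - P₀ ∈ Q` expressing `g^(r+1) ∈ J I^r`, this gives `g^(L+1) ∈ J I^L`,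
whence `I^(L+1) = J I^L` and the reduction number is at most `L`.
-/

lemma Ideal.sup_pow_succ_le {J K : Ideal R} (k : ℕ) :
    (J ⊔ K) ^ (k + 1) ≤ J * (J ⊔ K) ^ k ⊔ K ^ (k + 1) := by
  induction k with
  | zero => simp
  | succ k ih =>
    refine (pow_succ' (J ⊔ K) (k + 1) ▸ Ideal.mul_mono_right ih).trans ?_
    rw [Ideal.mul_sup]
    refine sup_le ?_ ?_
    · rw [mul_left_comm, ← pow_succ']
      exact le_sup_left
    · rw [Ideal.sup_mul, ← pow_succ' K]
      exact sup_le_sup_right (Ideal.mul_mono_right (Ideal.pow_right_mono le_sup_right _)) _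

lemma Ideal.sup_span_singleton_pow_succ_eq {J : Ideal R} {g : R} {k : ℕ}
    (hg : g ^ (k + 1) ∈ J * (J ⊔ Ideal.span {g}) ^ k) :
    (J ⊔ Ideal.span {g}) ^ (k + 1) = J * (J ⊔ Ideal.span {g}) ^ k := by
  refine le_antisymm ((Ideal.sup_pow_succ_le k).trans (sup_le le_rfl ?_)) ?_
  · rwa [Ideal.span_singleton_pow, Ideal.span_le, Set.singleton_subset_iff]
  · rw [pow_succ']
    exact Ideal.mul_mono_left le_sup_left

namespace MvPolynomial

variable {σ : Type*}

noncomputable def evalMulX (v : σ → R) : MvPolynomial σ R →ₐ[R] R[X] :=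
  aeval fun i => Polynomial.C (v i) * Polynomial.X

lemma IsHomogeneous.evalMulX_eq {P : MvPolynomial σ R} {d : ℕ} (hP : P.IsHomogeneous d)
    (v : σ → R) : evalMulX v P = Polynomial.C (eval v P) * Polynomial.X ^ d := by
  rw [evalMulX, P.as_sum, map_sum, map_sum, map_sum, Finset.sum_mul]
  refine Finset.sum_congr rfl fun α hα => ?_
  rw [aeval_monomial, eval_monomial, ← hP (mem_support_iff.mp hα)]
  simp only [Finsupp.prod, Finsupp.weight_apply, Finsupp.sum, mul_pow, Finset.prod_mul_distrib,
    map_mul, map_prod, map_pow, Finset.prod_pow_eq_pow_sum, Polynomial.algebraMap_eq,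
    Pi.one_apply, smul_eq_mul, mul_one]
  ring

lemma coeff_evalMulX (v : σ → R) (P : MvPolynomial σ R) (e : ℕ) :
    (evalMulX v P).coeff e = eval v (homogeneousComponent e P) := by
  conv_lhs => rw [← sum_homogeneousComponent P]
  simp only [map_sum, Polynomial.finsetSum_coeff,
    fun i => (homogeneousComponent_isHomogeneous i P).evalMulX_eq, Polynomial.coeff_C_mul_X_pow]
  rw [Finset.sum_ite_eq]
  split_ifs with he
  · rfl
  · rw [homogeneousComponent_eq_zero _ _ (by simpa using he), map_zero]

end MvPolynomial

open MvPolynomial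

lemma mem_reesEquations_iff {m : ℕ} (v : Fin m → R) (P : MvPolynomial (Fin m) R) :
    P ∈ reesEquations v ↔ evalMulX v P = 0 := by
  have hval : (Subalgebra.val _).comp (reesPresentation v) = evalMulX v := by
    rw [reesPresentation, comp_aeval, evalMulX]
    simp [Polynomial.C_mul_X_eq_monomial]
  rw [reesEquations, RingHom.mem_ker, ← hval]
  exact ZeroMemClass.coe_eq_zero.symm

lemma MvPolynomial.IsHomogeneous.mem_reesEquations_iff {m d : ℕ} {v : Fin m → R}
    {P : MvPolynomial (Fin m) R} (hP : P.IsHomogeneous d) :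
    P ∈ reesEquations v ↔ eval v P = 0 := by
  rw [_root_.mem_reesEquations_iff, hP.evalMulX_eq, Polynomial.C_mul_X_pow_eq_monomial,
    Polynomial.monomial_eq_zero_iff]

lemma homogeneousComponent_mem_reesEquations {m : ℕ} {v : Fin m → R}
    {P : MvPolynomial (Fin m) R} (hP : P ∈ reesEquations v) (e : ℕ) :
    homogeneousComponent e P ∈ reesEquations v := by
  rw [(homogeneousComponent_isHomogeneous e P).mem_reesEquations_iff, ← coeff_evalMulX,
    (mem_reesEquations_iff v P).mp hP, Polynomial.coeff_zero]

section relationType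

variable {m : ℕ}

lemma idealUpToDegree_le (Q : Ideal (MvPolynomial (Fin m) R)) (d : ℕ) :
    idealUpToDegree Q d ≤ Q :=
  Ideal.span_le.mpr fun _ hP => hP.1

lemma idealUpToDegree_mono (Q : Ideal (MvPolynomial (Fin m) R)) {d e : ℕ} (h : d ≤ e) :
    idealUpToDegree Q d ≤ idealUpToDegree Q e :=
  Ideal.span_mono fun _ ⟨hPQ, k, hk, hP⟩ => ⟨hPQ, k, hk.trans h, hP⟩

lemma exists_idealUpToDegree_eq {Q : Ideal (MvPolynomial (Fin m) R)} (hQ : Q.FG)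
    (hcomp : ∀ P ∈ Q, ∀ e, homogeneousComponent e P ∈ Q) :
    ∃ d, idealUpToDegree Q d = Q := by
  obtain ⟨T, rfl⟩ := hQ
  refine ⟨T.sup totalDegree, le_antisymm (idealUpToDegree_le _ _) (Ideal.span_le.mpr ?_)⟩
  intro P hP
  have hPQ : P ∈ Ideal.span T := Ideal.subset_span hP
  rw [← sum_homogeneousComponent P]
  refine Ideal.sum_mem _ fun e he => Ideal.subset_span ⟨hcomp P hPQ e, e, ?_,
    homogeneousComponent_isHomogeneous e P⟩
  exact (Nat.lt_succ_iff.mp (Finset.mem_range.mp he)).trans (Finset.le_sup hP)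

lemma relationType_spec [IsNoetherianRing R] (v : Fin m → R) :
    1 ≤ relationType v ∧
      idealUpToDegree (reesEquations v) (relationType v) = reesEquations v := by
  obtain ⟨d, hd⟩ := exists_idealUpToDegree_eq (IsNoetherian.noetherian (reesEquations v))
    fun _ hP e => homogeneousComponent_mem_reesEquations hP e
  have hmem : d + 1 ∈ {L | 1 ≤ L ∧ idealUpToDegree (reesEquations v) L = reesEquations v} :=
    ⟨by omega, le_antisymm (idealUpToDegree_le _ _)
      (hd.symm.le.trans (idealUpToDegree_mono _ (Nat.le_succ d)))⟩
  exact Nat.sInf_mem ⟨d + 1, hmem⟩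

end relationType

section snoc

variable {n : ℕ} (f : Fin n → R) (g : R)

lemma span_range_snoc :
    Ideal.span (Set.range (Fin.snoc f g : Fin (n + 1) → R)) =
      Ideal.span (Set.range f) ⊔ Ideal.span {g} := by
  rw [Fin.range_snoc, Set.insert_eq, Ideal.span_union, sup_comm]

lemma eq_single_last_of_forall_castSucc_eq_zero {e : ℕ} {α : Fin (n + 1) →₀ ℕ}
    (hα : α.degree = e) (h : ∀ i : Fin n, α i.castSucc = 0) :
    α = Finsupp.single (Fin.last n) e := by
  have hlast : α (Fin.last n) = e := by
    simpa [Finsupp.degree_eq_sum, Fin.sum_univ_castSucc, h] using hα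
  ext j
  induction j using Fin.lastCases with
  | last => simp [hlast]
  | cast i => simp [h i, (Fin.castSucc_lt_last i).ne]

lemma eval_snoc_monomial_sub_mem {e : ℕ} {α : Fin (n + 1) →₀ ℕ} (hα : α.degree = e + 1)
    (c : R) :
    eval (Fin.snoc f g) (monomial α c) - eval (Fin.snoc 0 1) (monomial α c) * g ^ (e + 1) ∈
      Ideal.span (Set.range f) * Ideal.span (Set.range (Fin.snoc f g : Fin (n + 1) → R)) ^ e := by
  by_cases h : ∀ i : Fin n, α i.castSucc = 0
  · rw [eq_single_last_of_forall_castSucc_eq_zero hα h, MvPolynomial.eval_monomial,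
      MvPolynomial.eval_monomial, Finsupp.prod_single_index (by simp),
      Finsupp.prod_single_index (by simp), Fin.snoc_last, Fin.snoc_last, one_pow, mul_one,
      sub_self]
    exact zero_mem _
  push Not at h
  obtain ⟨i, hi⟩ := h
  obtain ⟨β, rfl⟩ : ∃ β, α = Finsupp.single i.castSucc 1 + β :=
    exists_add_of_le (Finsupp.single_le_iff.mpr (Nat.one_le_iff_ne_zero.mpr hi))
  have hβ : β.degree = e := by
    rw [map_add, Finsupp.degree_single] at hα
    omega
  rw [monomial_single_add]
  simp only [map_mul, MvPolynomial.eval_X, Fin.snoc_castSucc, Pi.zero_apply, pow_one, zero_mul,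
    sub_zero]
  exact Ideal.mul_mem_mul (Ideal.subset_span ⟨i, rfl⟩)
    ((Ideal.mem_span_pow_iff_exists_isHomogeneous _ _).mpr
      ⟨_, isHomogeneous_monomial c hβ, rfl⟩)

lemma MvPolynomial.IsHomogeneous.eval_snoc_sub_mem {e : ℕ} {P : MvPolynomial (Fin (n + 1)) R}
    (hP : P.IsHomogeneous (e + 1)) :
    eval (Fin.snoc f g) P - eval (Fin.snoc 0 1) P * g ^ (e + 1) ∈
      Ideal.span (Set.range f) * Ideal.span (Set.range (Fin.snoc f g : Fin (n + 1) → R)) ^ e := by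
  rw [P.as_sum, map_sum, map_sum, Finset.sum_mul, ← Finset.sum_sub_distrib]
  refine Ideal.sum_mem _ fun α hα => eval_snoc_monomial_sub_mem f g ?_ _
  rw [Finsupp.degree_eq_weight_one]
  exact hP (mem_support_iff.mp hα)

lemma exists_isHomogeneous_eval_snoc_eq {k : ℕ} {x : R}
    (hx : x ∈ Ideal.span (Set.range f) *
      Ideal.span (Set.range (Fin.snoc f g : Fin (n + 1) → R)) ^ k) :
    ∃ P : MvPolynomial (Fin (n + 1)) R, P.IsHomogeneous (k + 1) ∧
      eval (Fin.snoc f g) P = x ∧ eval (Fin.snoc 0 1) P = 0 := by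
  refine Submodule.mul_induction_on hx (fun a ha b hb => ?_) ?_
  · obtain ⟨A, hA, rfl⟩ := (Ideal.mem_span_iff_exists_isHomogeneous f a).mp ha
    obtain ⟨B, hB, rfl⟩ := (Ideal.mem_span_pow_iff_exists_isHomogeneous _ b).mp hb
    refine ⟨rename Fin.castSucc A * B, ?_, ?_, ?_⟩
    · rw [add_comm k 1]
      exact hA.rename_isHomogeneous.mul hB
    · rw [map_mul, eval_rename, Fin.snoc_comp_castSucc]
    · have hA0 : eval 0 A = 0 := by
        rw [MvPolynomial.eval_zero, constantCoeff_eq]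
        exact hA.coeff_eq_zero (by simp)
      rw [map_mul, eval_rename, Fin.snoc_comp_castSucc, hA0, zero_mul]
  · rintro x y ⟨P, hP, hPx, hPw⟩ ⟨Q, hQ, hQx, hQw⟩
    exact ⟨P + Q, hP.add hQ, by rw [map_add, hPx, hQx], by rw [map_add, hPw, hQw, add_zero]⟩

lemma eval_snoc_mul_pow_mem_of_mem_reesEquations {L e : ℕ} (he : e ≤ L + 1)
    {q : MvPolynomial (Fin (n + 1)) R} (hq : q.IsHomogeneous e)
    (hqQ : q ∈ reesEquations (Fin.snoc f g)) :
    eval (Fin.snoc 0 1) q * g ^ (L + 1) ∈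
      Ideal.span (Set.range f) * Ideal.span (Set.range (Fin.snoc f g : Fin (n + 1) → R)) ^ L := by
  have hqF : eval (Fin.snoc f g) q = 0 := hq.mem_reesEquations_iff.mp hqQ
  cases e with
  | zero =>
    have hqC : q = MvPolynomial.C (coeff 0 q) := by
      rw [← homogeneousComponent_zero, homogeneousComponent_eq_self hq]
    rw [hqC, MvPolynomial.eval_C] at hqF ⊢
    rw [hqF, zero_mul]
    exact zero_mem _
  | succ e =>
    have h := hq.eval_snoc_sub_mem f g
    rw [hqF, zero_sub, neg_mem_iff] at h
    have hg : g ∈ Ideal.span (Set.range (Fin.snoc f g : Fin (n + 1) → R)) :=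
      Ideal.subset_span ⟨Fin.last n, by simp⟩
    have h' := Ideal.mul_mem_mul h (Ideal.pow_mem_pow hg (L - e))
    rwa [mul_assoc, ← pow_add, mul_assoc, ← pow_add, Nat.add_sub_cancel' (by omega),
      show e + 1 + (L - e) = L + 1 by omega] at h'

lemma pow_mem_mul_pow_of_idealUpToDegree_eq {r L : ℕ}
    (hr : g ^ (r + 1) ∈ Ideal.span (Set.range f) *
      Ideal.span (Set.range (Fin.snoc f g : Fin (n + 1) → R)) ^ r)
    (hL : idealUpToDegree (reesEquations (Fin.snoc f g)) (L + 1) = reesEquations (Fin.snoc f g)) :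
    g ^ (L + 1) ∈ Ideal.span (Set.range f) *
      Ideal.span (Set.range (Fin.snoc f g : Fin (n + 1) → R)) ^ L := by
  set N : Ideal R := (Ideal.span (Set.range f) *
    Ideal.span (Set.range (Fin.snoc f g : Fin (n + 1) → R)) ^ L).colon {g ^ (L + 1)}
  have hQ : reesEquations (Fin.snoc f g) ≤
      (Ideal.map Polynomial.C N).comap (evalMulX (Fin.snoc 0 1)) := by
    rw [← hL]
    refine Ideal.span_le.mpr ?_
    rintro q ⟨hqQ, e, he, hq⟩
    rw [SetLike.mem_coe, Ideal.mem_comap, hq.evalMulX_eq]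
    refine Ideal.mul_mem_right _ _ (Ideal.mem_map_of_mem _ ?_)
    exact Submodule.mem_colon_singleton.mpr
      (eval_snoc_mul_pow_mem_of_mem_reesEquations f g he hq hqQ)
  obtain ⟨P₀, hP₀, hP₀F, hP₀w⟩ := exists_isHomogeneous_eval_snoc_eq f g hr
  have hP : (X (Fin.last n) ^ (r + 1) - P₀).IsHomogeneous (r + 1) :=
    (isHomogeneous_X_pow _ _).sub hP₀
  have hPQ : X (Fin.last n) ^ (r + 1) - P₀ ∈ reesEquations (Fin.snoc f g) := by
    rw [hP.mem_reesEquations_iff]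
    simp [hP₀F]
  have h1 := Ideal.mem_map_C_iff.mp (hQ hPQ) (r + 1)
  rw [hP.evalMulX_eq] at h1
  simpa [hP₀w] using Submodule.mem_colon_singleton.mp h1

end snoc

theorem stmt0_general {R : Type*} [CommRing R] [IsNoetherianRing R]
    {n : ℕ} (f : Fin n → R) (g : R) (J I : Ideal R)
    (hJ : J = Ideal.span (Set.range f)) (hI : I = J ⊔ Ideal.span {g})
    (hred : ∃ r : ℕ, I ^ (r + 1) = J * I ^ r) :
    reductionNumber J I + 1 ≤ relationType (Fin.snoc f g) := by
  subst hJ hI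
  obtain ⟨hL1, hL⟩ := relationType_spec (Fin.snoc f g)
  obtain ⟨L, hLeq⟩ : ∃ L, relationType (Fin.snoc f g) = L + 1 :=
    ⟨_, (Nat.succ_pred_eq_of_pos hL1).symm⟩
  rw [hLeq] at hL ⊢
  obtain ⟨r, hr⟩ := hred
  have hgr : g ^ (r + 1) ∈ Ideal.span (Set.range f) *
      Ideal.span (Set.range (Fin.snoc f g : Fin (n + 1) → R)) ^ r := by
    rw [span_range_snoc, ← hr]
    exact Ideal.pow_mem_pow (Ideal.mem_sup_right (Ideal.mem_span_singleton_self g)) _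
  have hgL := pow_mem_mul_pow_of_idealUpToDegree_eq f g hgr hL
  rw [span_range_snoc] at hgL
  exact Nat.succ_le_succ (Nat.sInf_le (Ideal.sup_span_singleton_pow_succ_eq hgL))

theorem stmt0 {R : Type*} [CommRing R] [IsNoetherianRing R] [IsLocalRing R]
    {n : ℕ} (f : Fin n → R) (g : R) (J I : Ideal R)
    (hJ : J = Ideal.span (Set.range f)) (hI : I = J ⊔ Ideal.span {g})
    (hred : ∃ r : ℕ, I ^ (r + 1) = J * I ^ r) :
    reductionNumber J I + 1 ≤ relationType (Fin.snoc f g) :=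
  stmt0_general f g J I hJ hI hred
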